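/- arXiv:0711.4347 — 3 statements merged into one kernel-verified Lean document; each statement's English description precedes it below -/
import Mathlib

section
/- Let G be a finite group of characteristic p, P a p-subgroup of G, and H a subgroup of G with P·C_G(P) ≤ H ≤ N_G(P). Then H has characteristic p. -/
/-- The largest normal `p`-subgroup `O_p(G)`: the join of all normal `p`-subgroups. -/
def pCore (p : ℕ) (G : Type*) [Group G] : Subgroup G :=
  ⨆ (N : Subgroup G) (_ : N.Normal) (_ : IsPGroup p N), N

/-- A group `G` has characteristic `p` if `C_G(O_p(G)) ≤ O_p(G)`. -/
def HasCharP (p : ℕ) (G : Type*) [Group G] : Prop :=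
  Subgroup.centralizer (pCore p G : Set G) ≤ pCore p G

/-- An element is `p`-central if it has order `p` and lies in the center of some
Sylow `p`-subgroup of `G`. -/
def IsPCentral (p : ℕ) {G : Type*} [Group G] (x : G) : Prop :=
  orderOf x = p ∧ ∃ S : Sylow p G,
    x ∈ (S : Subgroup G) ⊓ Subgroup.centralizer ((S : Subgroup G) : Set G)

/-- A `p`-subgroup `P` is `p`-centric if `Z(P) = P ⊓ C_G(P)` is a Sylow `p`-subgroup of
`C_G(P)`, expressed via maximality among `p`-subgroups of `C_G(P)`. -/
def IsPCentric (p : ℕ) {G : Type*} [Group G] (P : Subgroup G) : Prop :=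
  ∀ Q : Subgroup G, Q ≤ Subgroup.centralizer (P : Set G) → IsPGroup p Q →
    P ⊓ Subgroup.centralizer (P : Set G) ≤ Q →
    Q = P ⊓ Subgroup.centralizer (P : Set G)

/-- The step `P ↦ O_p(N_G(P))`, viewed as a subgroup of `G`. -/
def pRadicalStep (p : ℕ) {G : Type*} [Group G] (P : Subgroup G) : Subgroup G :=
  (pCore p ↥(Subgroup.normalizer (P : Set G))).map (Subgroup.normalizer (P : Set G)).subtype

/-- The chain `P₀ = Q`, `P_{i+1} = O_p(N_G(P_i))`. -/
def radChain (p : ℕ) {G : Type*} [Group G] (Q : Subgroup G) : ℕ → Subgroup G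
  | 0 => Q
  | n + 1 => pRadicalStep p (radChain p Q n)

/-- `G` has local characteristic `p`: every `p`-local subgroup has characteristic `p`. -/
def LocalCharP (p : ℕ) (G : Type*) [Group G] : Prop :=
  ∀ P : Subgroup G, P ≠ ⊥ → IsPGroup p P → HasCharP p ↥(Subgroup.normalizer (P : Set G))

/-- `G` has parabolic characteristic `p`: every `p`-local subgroup containing a Sylow
`p`-subgroup of `G` has characteristic `p`. -/
def ParabolicCharP (p : ℕ) (G : Type*) [Group G] : Prop :=
  ∀ P : Subgroup G, P ≠ ⊥ → IsPGroup p P →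
    (∃ S : Sylow p G, (S : Subgroup G) ≤ Subgroup.normalizer (P : Set G)) → HasCharP p ↥(Subgroup.normalizer (P : Set G))

/-! Both `P` and `O_p(G) ∩ H` are normal `p`-subgroups of `H`, so they lie in `O_p(H)`. An element
`x ∈ C_H(O_p(H))` of prime order `q ≠ p` thus centralizes `P` and `C_{O_p(G)}(P)`; by Thompson's
`P × Q`-lemma it centralizes `O_p(G)`, so it lies in the `p`-group `O_p(G)`, which is absurd. Hence
`C_H(O_p(H))` is a normal `p`-subgroup of `H`, and so it is contained in `O_p(H)`.

The `P × Q`-lemma is proved along the series `R, [R,P], [[R,P],P], …`, which reaches `1` since `PR`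
is nilpotent. If `x` centralizes `[K,P]`, the three subgroups lemma puts `[x,K]` into `C_R(P)`, so
`x` commutes with each `c = [x,r]`; then `x^k r x^{-k} = c^k r` forces `c^q = 1`, whence `c = 1`. -/

open Subgroup
open scoped commutatorElement

section PCore
variable {p : ℕ} {G : Type*} [Group G]

theorem pCore_eq_sSup : pCore p G = sSup {N : Subgroup G | N.Normal ∧ IsPGroup p N} := by
  simp only [pCore, sSup_eq_iSup, Set.mem_ofPred_eq, iSup_and]

theorem le_pCore {N : Subgroup G} (hN : N.Normal) (hNp : IsPGroup p N) : N ≤ pCore p G :=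
  pCore_eq_sSup (p := p) (G := G) ▸ le_sSup ⟨hN, hNp⟩

instance normal_pCore : (pCore p G).Normal :=
  pCore_eq_sSup (p := p) (G := G) ▸ sSup_normal _ fun _ h => h.1

theorem isPGroup_pCore [Finite G] [Fact p.Prime] : IsPGroup p (pCore p G) := by
  let S : Sylow p G := default
  refine S.isPGroup'.to_le (pCore_eq_sSup (p := p) (G := G) ▸ sSup_le ?_)
  rintro N ⟨hN, hNp⟩
  have := hN
  exact hNp.le_sylow_of_normal S

end PCore

section Coprime
variable {G : Type*} [Group G] {p n : ℕ}

theorem IsPGroup.of_forall_orderOf_prime [Finite G]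
    (h : ∀ (q : ℕ) (g : G), q.Prime → orderOf g = q → q = p) : IsPGroup p G :=
  IsPGroup.of_card <| Nat.eq_prime_pow_of_unique_prime_dvd Nat.card_pos.ne' fun {q} hq hdvd =>
    haveI := Fact.mk hq
    let ⟨g, hg⟩ := exists_prime_orderOf_dvd_card' q hdvd
    h q g hq hg

theorem IsPGroup.eq_one_of_pow_eq_one (hG : IsPGroup p G) (hn : p.Coprime n) {g : G}
    (hg : g ^ n = 1) : g = 1 :=
  orderOf_eq_one_iff.mp <|
    (hG.orderOf_coprime hn g).eq_one_of_dvd (orderOf_dvd_of_pow_eq_one hg)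

theorem commutatorElement_pow_eq_one_of_commute {x y : G} (hx : x ^ n = 1)
    (h : Commute x ⁅x, y⁆) : ⁅x, y⁆ ^ n = 1 := by
  have hxy : x * y = ⁅x, y⁆ * y * x := by rw [commutatorElement_def]; group
  have hconj : ∀ k : ℕ, x ^ k * y = ⁅x, y⁆ ^ k * y * x ^ k := by
    intro k
    induction k with
    | zero => simp
    | succ k ih =>
      calc x ^ (k + 1) * y = x * (x ^ k * y) := by group
        _ = ⁅x, y⁆ ^ k * (x * y) * x ^ k := by
          rw [ih, ← mul_assoc, ← mul_assoc, (h.pow_right k).eq]; group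
        _ = ⁅x, y⁆ ^ (k + 1) * y * x ^ (k + 1) := by
          rw [hxy, pow_succ, pow_succ']; simp only [mul_assoc]
  simpa [hx] using hconj n

end Coprime

section PxQ
variable {G : Type*} [Group G] {p n : ℕ} {P R K T : Subgroup G} {x : G}

theorem iterate_commutator_le_lowerCentralSeries (hR : R ≤ T) (hP : P ≤ T) (i : ℕ) :
    (fun L => ⁅L, P⁆)^[i] R ≤ T.lowerCentralSeries i := by
  induction i with
  | zero => exact hR
  | succ i ih =>
    rw [Function.iterate_succ_apply', Subgroup.lowerCentralSeries_succ]
    exact commutator_mono ih hP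

theorem exists_iterate_commutator_eq_bot [Finite G] [Fact p.Prime] (hP : IsPGroup p P)
    (hR : IsPGroup p R) (hPR : P ≤ normalizer (R : Set G)) :
    ∃ m, (fun L => ⁅L, P⁆)^[m] R = ⊥ := by
  obtain ⟨m, hm⟩ := (isNilpotent_iff_lowerCentralSeries (P ⊔ R)).mp
    (hP.to_sup_of_normal_right' hR hPR).isNilpotent
  exact ⟨m, le_bot_iff.mp <| hm ▸ iterate_commutator_le_lowerCentralSeries le_sup_right
    le_sup_left m⟩

theorem mem_centralizer_of_mem_centralizer_commutator (hR : IsPGroup p R) (hn : p.Coprime n)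
    (hx : x ^ n = 1) (hxR : x ∈ normalizer (R : Set G)) (hxP : x ∈ centralizer (P : Set G))
    (hxRP : x ∈ centralizer ((R ⊓ centralizer (P : Set G) : Subgroup G) : Set G))
    (hKR : K ≤ R) (hxKP : x ∈ centralizer ((⁅K, P⁆ : Subgroup G) : Set G)) :
    x ∈ centralizer (K : Set G) := by
  have centralizes {S : Subgroup G} (hS : x ∈ centralizer (S : Set G)) : ⁅S, zpowers x⁆ = ⊥ := by
    rw [commutator_comm, commutator_eq_bot_iff_le_centralizer, zpowers_le]
    exact hS
  have hXK_le_R : ⁅zpowers x, K⁆ ≤ R :=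
    (commutator_mono le_rfl hKR).trans
      (le_normalizer_iff_commutator_le_right.mp (zpowers_le.mpr hxR))
  have hXK_le_CP : ⁅zpowers x, K⁆ ≤ centralizer (P : Set G) :=
    commutator_eq_bot_iff_le_centralizer.mp <| commutator_commutator_eq_bot_of_rotate
      (centralizes hxKP) (by rw [centralizes hxP, commutator_bot_left])
  rw [mem_centralizer_iff]
  intro r hr
  have hc := commutator_mem_commutator (mem_zpowers x) hr
  have hcomm : Commute x ⁅x, r⁆ :=
    (mem_centralizer_iff.mp hxRP _ ⟨hXK_le_R hc, hXK_le_CP hc⟩).symm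
  have hc1 : ⁅x, r⁆ = 1 := congrArg Subtype.val <|
    hR.eq_one_of_pow_eq_one (g := ⟨_, hXK_le_R hc⟩) hn <|
      Subtype.ext (commutatorElement_pow_eq_one_of_commute hx hcomm)
  exact (commutatorElement_eq_one_iff_mul_comm.mp hc1).symm

theorem IsPGroup.mem_centralizer_of_mem_centralizer_inf_centralizer [Finite G] [Fact p.Prime]
    (hP : IsPGroup p P) (hR : IsPGroup p R) (hPR : P ≤ normalizer (R : Set G))
    (hn : p.Coprime n) (hx : x ^ n = 1) (hxR : x ∈ normalizer (R : Set G))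
    (hxP : x ∈ centralizer (P : Set G))
    (hxRP : x ∈ centralizer ((R ⊓ centralizer (P : Set G) : Subgroup G) : Set G)) :
    x ∈ centralizer (R : Set G) := by
  obtain ⟨m, hm⟩ := exists_iterate_commutator_eq_bot hP hR hPR
  suffices ∀ j, ∀ K ≤ R, (fun L => ⁅L, P⁆)^[j] K = ⊥ → x ∈ centralizer (K : Set G) from
    this m R le_rfl hm
  intro j
  induction j with
  | zero =>
    rintro K - rfl
    simp [mem_centralizer_iff]
  | succ j ih =>
    intro K hKR hK
    have hKP : ⁅K, P⁆ ≤ R :=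
      (commutator_mono hKR le_rfl).trans (le_normalizer_iff_commutator_le_left.mp hPR)
    exact mem_centralizer_of_mem_centralizer_commutator hR hn hx hxR hxP hxRP hKR
      (ih _ hKP (by rwa [Function.iterate_succ_apply] at hK))

end PxQ

theorem coe_mem_centralizer_of_subgroupOf_le {G : Type*} [Group G] {H K : Subgroup G}
    {Q : Subgroup H} (hKH : K ≤ H) (hKQ : K.subgroupOf H ≤ Q) {g : H}
    (hg : g ∈ centralizer (Q : Set H)) : (g : G) ∈ centralizer (K : Set G) :=
  mem_centralizer_iff.mpr fun k hk =>
    congrArg Subtype.val (mem_centralizer_iff.mp hg ⟨k, hKH hk⟩ (hKQ (mem_subgroupOf.mpr hk)))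

/-- If `G` has characteristic `p`, `P` is a `p`-subgroup, and
`P·C_G(P) ≤ H ≤ N_G(P)`, then `H` has characteristic `p`. -/
theorem stmt3 (p : ℕ) [Fact p.Prime] (G : Type*) [Group G] [Finite G]
    (hG : HasCharP p G) (P : Subgroup G) (hP : IsPGroup p P)
    (H : Subgroup G) (h1 : P ⊔ Subgroup.centralizer (P : Set G) ≤ H)
    (h2 : H ≤ Subgroup.normalizer (P : Set G)) :
    HasCharP p ↥H := by
  have hR : IsPGroup p (pCore p G) := isPGroup_pCore
  have hPQ : P.subgroupOf H ≤ pCore p H :=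
    le_pCore (normal_subgroupOf_of_le_normalizer h2) hP.comap_subtype
  have hRQ : (pCore p G).subgroupOf H ≤ pCore p H :=
    le_pCore (normal_pCore.subgroupOf H) hR.comap_subtype
  refine le_pCore inferInstance (IsPGroup.of_forall_orderOf_prime fun q g hq hgq => ?_)
  by_contra hqp
  have hcop : p.Coprime q := (Nat.coprime_primes Fact.out hq).mpr (Ne.symm hqp)
  have hgq' : orderOf ((g : H) : G) = q := by rw [orderOf_coe, orderOf_coe, hgq]
  have hxR : ((g : H) : G) ∈ pCore p G := hG <|
    hP.mem_centralizer_of_mem_centralizer_inf_centralizer hR le_normalizer_of_normal hcop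
      (hgq' ▸ pow_orderOf_eq_one _) (le_normalizer_of_normal (K := ⊤) (mem_top _))
      (coe_mem_centralizer_of_subgroupOf_le (le_sup_left.trans h1) hPQ g.2)
      (coe_mem_centralizer_of_subgroupOf_le (inf_le_right.trans (le_sup_right.trans h1))
        ((subgroupOf_mono _ inf_le_left).trans hRQ) g.2)
  have hx1 := congrArg Subtype.val <| hR.eq_one_of_pow_eq_one (g := ⟨_, hxR⟩) hcop <|
    Subtype.ext (hgq' ▸ pow_orderOf_eq_one _)
  exact hq.one_lt.ne' (hgq' ▸ orderOf_eq_one_iff.mpr hx1)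
end

section
/- Every p-centric subgroup of a finite group G is distinguished; that is, if Z(P) is a Sylow p-subgroup of C_G(P), then Ω_1 Z(P) contains a p-central element of G. -/
/-!
If `S ≥ P` is a `p`-subgroup, then `Z(P) ⊔ Z(S)` lies in `S`, centralizes `P` and contains
`Z(P)`, so `p`-centricity forces `Z(S) ≤ Z(P)`. Taking `S` Sylow, the nontrivial `p`-group `S`
has an element of order `p` in `Z(S)`; it is `p`-central and lies in `Z(P)`.
-/

open Subgroup

theorem IsPGroup.exists_orderOf_eq_mem_center {p : ℕ} [Fact p.Prime] {H : Type*} [Group H]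
    [Finite H] [Nontrivial H] (hH : IsPGroup p H) : ∃ g ∈ center H, orderOf g = p := by
  have := hH.center_nontrivial
  have hdvd : p ∣ Nat.card (center H) :=
    ((hH.to_subgroup _).card_eq_or_dvd).resolve_left Finite.one_lt_card.ne'
  obtain ⟨g, hg⟩ := exists_prime_orderOf_dvd_card' p hdvd
  exact ⟨g, g.2, by rw [← hg, orderOf_coe]⟩

theorem IsPGroup.exists_orderOf_eq_mem_inf_centralizer {p : ℕ} [Fact p.Prime] {G : Type*}
    [Group G] {K : Subgroup G} [Finite K] (hK : IsPGroup p K) (hne : K ≠ ⊥) :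
    ∃ x ∈ K ⊓ centralizer (K : Set G), orderOf x = p := by
  have : Nontrivial K := (nontrivial_iff_ne_bot K).mpr hne
  obtain ⟨g, hg, hgp⟩ := hK.exists_orderOf_eq_mem_center
  refine ⟨g, ⟨g.2, fun k hk => ?_⟩, by rw [← hgp, orderOf_coe]⟩
  exact congrArg Subtype.val (mem_center_iff.mp hg ⟨k, hk⟩)

theorem IsPCentric.inf_centralizer_le {p : ℕ} {G : Type*} [Group G] {P S : Subgroup G}
    (hc : IsPCentric p P) (hS : IsPGroup p S) (hPS : P ≤ S) :
    S ⊓ centralizer (S : Set G) ≤ P ⊓ centralizer (P : Set G) := by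
  have hCS : centralizer (S : Set G) ≤ centralizer (P : Set G) := centralizer_le hPS
  have hsup_le_S : P ⊓ centralizer (P : Set G) ⊔ S ⊓ centralizer (S : Set G) ≤ S :=
    sup_le (inf_le_left.trans hPS) inf_le_left
  have hsup_le_C : P ⊓ centralizer (P : Set G) ⊔ S ⊓ centralizer (S : Set G) ≤
      centralizer (P : Set G) :=
    sup_le inf_le_right (inf_le_right.trans hCS)
  have hsup_eq := hc _ hsup_le_C (hS.to_le hsup_le_S) le_sup_left
  exact hsup_eq ▸ le_sup_right

/-- Every nontrivial `p`-centric subgroup is distinguished: its center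
`Z(P) = P ⊓ C_G(P)` contains a `p`-central element of `G`. -/
theorem stmt6 (p : ℕ) [Fact p.Prime] (G : Type*) [Group G] [Finite G]
    (P : Subgroup G) (hne : P ≠ ⊥) (hP : IsPGroup p P) (hc : IsPCentric p P) :
    ∃ x ∈ P ⊓ Subgroup.centralizer (P : Set G), IsPCentral p x := by
  obtain ⟨S, hPS⟩ := hP.exists_le_sylow
  have hSne : (S : Subgroup G) ≠ ⊥ := fun h => hne (le_bot_iff.mp (h ▸ hPS))
  obtain ⟨x, hxZS, hxp⟩ := S.isPGroup'.exists_orderOf_eq_mem_inf_centralizer hSne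
  exact ⟨x, hc.inf_centralizer_le S.isPGroup' hPS hxZS, hxp, S, hxZS⟩
end

section
/- Let G be a finite group, z a p-central element, and Z = ⟨z⟩. Then the poset of nontrivial p-subgroups of G that contain a p-central element and are normalized by Z is conically contractible: for P in the poset, P ≤ PZ ≥ Z gives a contracting homotopy, where PZ is the subgroup generated by P and Z. -/
theorem IsPCentral.isPGroup_zpowers {p : ℕ} {G : Type*} [Group G] {z : G}
    (hz : IsPCentral p z) : IsPGroup p (Subgroup.zpowers z) :=
  IsPGroup.of_card (n := 1) (by rw [Nat.card_zpowers, hz.1, pow_one])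

theorem stmt13_general (p : ℕ) (G : Type*) [Group G]
    (z : G) (hz : IsPCentral p z) (Z : Subgroup G) (hZ : Z = Subgroup.zpowers z) :
    ∀ P : Subgroup G,
      (P ≠ ⊥ ∧ IsPGroup p P ∧ (∃ x ∈ P, IsPCentral p x) ∧ Z ≤ Subgroup.normalizer (P : Set G)) →
      (((P ⊔ Z) ≠ ⊥ ∧ IsPGroup p ↥(P ⊔ Z) ∧ (∃ x ∈ P ⊔ Z, IsPCentral p x) ∧
          Z ≤ Subgroup.normalizer ((P ⊔ Z : Subgroup G) : Set G)) ∧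
        P ≤ P ⊔ Z ∧ Z ≤ P ⊔ Z) := by
  rintro P ⟨hP_ne_bot, hP, ⟨x, hxP, hx⟩, hZ_le_normalizer⟩
  have hZ_pGroup : IsPGroup p Z := hZ ▸ hz.isPGroup_zpowers
  refine ⟨⟨ne_bot_of_le_ne_bot hP_ne_bot le_sup_left,
    hP.to_sup_of_normal_left' hZ_pGroup hZ_le_normalizer,
    ⟨x, Subgroup.mem_sup_left hxP, hx⟩,
    le_sup_right.trans Subgroup.le_normalizer⟩, le_sup_left, le_sup_right⟩

/-- For `z` a `p`-central element and `Z = ⟨z⟩`, the poset of nontrivial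
`p`-subgroups containing a `p`-central element and normalized by `Z` is conically
contractible via `P ≤ PZ ≥ Z`. -/
theorem stmt13 (p : ℕ) [Fact p.Prime] (G : Type*) [Group G] [Finite G]
    (z : G) (hz : IsPCentral p z) (Z : Subgroup G) (hZ : Z = Subgroup.zpowers z) :
    ∀ P : Subgroup G,
      (P ≠ ⊥ ∧ IsPGroup p P ∧ (∃ x ∈ P, IsPCentral p x) ∧ Z ≤ Subgroup.normalizer (P : Set G)) →
      (((P ⊔ Z) ≠ ⊥ ∧ IsPGroup p ↥(P ⊔ Z) ∧ (∃ x ∈ P ⊔ Z, IsPCentral p x) ∧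
          Z ≤ Subgroup.normalizer ((P ⊔ Z : Subgroup G) : Set G)) ∧
        P ≤ P ⊔ Z ∧ Z ≤ P ⊔ Z) :=
  stmt13_general p G z hz Z hZ
end
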